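/- arXiv:0709.4230 — 4 statements merged into one kernel-verified Lean document; each statement's English description precedes it below -/
import Mathlib

section
/- Let μ be a probability measure on a measurable space, M ≥ 1, and let f be measurable with 0 < f ≤ M almost everywhere and log f square-integrable. Set α = ∫ log f dμ and g = log f − α. Then for every β ∈ [0,1], the function β ↦ log ∫ e^{βg} dμ has derivative ∫ g e^{βg} dμ / ∫ e^{βg} dμ, and this derivative is bounded above by M ‖g‖₂ / ‖f‖₁, where ‖f‖₁ = ∫ |f| dμ and ‖g‖₂ = (∫ |g|² dμ)^{1/2}. In particular ∫ f^β dμ ≥ M^{β−1} ‖f‖₁ for all β ∈ [0,1]. -/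
/-!
On `[0, 1]` the functions `e^{b g}` are bounded uniformly in `b` (because `f ≤ M`), so
`b ↦ ∫ e^{b g}` can be differentiated under the integral sign by dominated convergence.
For the bound, `e^{β g} = c f^β` with `c = e^{-β α}`. Since `f ≤ M`, the numerator
`∫ g e^{β g}` is at most `c M^β ‖g‖₁ ≤ c M^β ‖g‖₂`, while `f^β ≥ M^{β-1} f` bounds the
denominator `c ∫ f^β` below by `c M^{β-1} ‖f‖₁`; the ratio is `M ‖g‖₂ / ‖f‖₁`.
-/

open MeasureTheory ProbabilityTheory Real Filter

theorem Real.abs_exp_sub_exp_le {x y C : ℝ} (hx : exp x ≤ C) (hy : exp y ≤ C) :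
    |exp x - exp y| ≤ C * |x - y| := by
  wlog hyx : y ≤ x generalizing x y
  · rw [abs_sub_comm, abs_sub_comm x]
    exact this hy hx (le_of_not_ge hyx)
  have h_tangent : exp x - exp y ≤ exp x * (x - y) := by
    have := add_one_le_exp (y - x)
    rw [exp_sub] at this
    have hx0 := exp_pos x
    rw [le_div_iff₀ hx0] at this
    linarith
  rw [abs_of_nonneg (sub_nonneg.2 (exp_le_exp.2 hyx)), abs_of_nonneg (sub_nonneg.2 hyx)]
  exact h_tangent.trans (mul_le_mul_of_nonneg_right hx (sub_nonneg.2 hyx))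

theorem Real.rpow_sub_one_mul_le_rpow {x M β : ℝ} (hx : 0 < x) (hxM : x ≤ M) (hβ : β ≤ 1) :
    M ^ (β - 1) * x ≤ x ^ β :=
  calc M ^ (β - 1) * x ≤ x ^ (β - 1) * x :=
        mul_le_mul_of_nonneg_right (rpow_le_rpow_of_nonpos hx hxM (by linarith)) hx.le
    _ = x ^ β := by rw [← rpow_add_one hx.ne', sub_add_cancel]

theorem Real.exp_mul_log_sub_le {x M a t : ℝ} (hx : 0 < x) (hxM : x ≤ M) (hM : 1 ≤ M)
    (ht₀ : 0 ≤ t) (ht₁ : t ≤ 1) : exp (t * (log x - a)) ≤ exp (log M + |a|) := by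
  have hlog : log x - a ≤ log M + |a| := by
    linarith [log_le_log hx hxM, neg_abs_le a]
  have hC : 0 ≤ log M + |a| := add_nonneg (log_nonneg hM) (abs_nonneg a)
  exact exp_le_exp.2 ((mul_le_mul_of_nonneg_left hlog ht₀).trans (mul_le_of_le_one_left hC ht₁))

namespace MeasureTheory

variable {α : Type*} [MeasurableSpace α] {μ : Measure α}

theorem hasDerivWithinAt_integral_of_dominated_of_lip {E : Type*} [NormedAddCommGroup E]
    [NormedSpace ℝ E] {F : ℝ → α → E} {F' : α → E} {s : Set ℝ} {x₀ : ℝ} {bound : α → ℝ}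
    (hF_int : ∀ x ∈ s, Integrable (F x) μ) (hx₀ : x₀ ∈ s)
    (h_lip : ∀ᵐ a ∂μ, ∀ x ∈ s, ‖F x a - F x₀ a‖ ≤ bound a * |x - x₀|)
    (bound_integrable : Integrable bound μ)
    (h_diff : ∀ᵐ a ∂μ, HasDerivWithinAt (F · a) (F' a) s x₀) :
    HasDerivWithinAt (fun x ↦ ∫ a, F x a ∂μ) (∫ a, F' a ∂μ) s x₀ := by
  rw [hasDerivWithinAt_iff_tendsto_slope]
  have h_slope : ∀ x ∈ s,
      ∫ a, slope (F · a) x₀ x ∂μ = slope (fun x ↦ ∫ a, F x a ∂μ) x₀ x := by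
    intro x hx
    simp only [slope_def_module]
    rw [integral_smul, integral_sub (hF_int x hx) (hF_int x₀ hx₀)]
  refine Tendsto.congr' (eventually_nhdsWithin_of_forall fun x hx ↦ h_slope x hx.1) ?_
  refine tendsto_integral_filter_of_dominated_convergence bound ?_ ?_ bound_integrable ?_
  · refine eventually_nhdsWithin_of_forall fun x hx ↦ ?_
    simp only [slope_def_module]
    exact (((hF_int x hx.1).sub (hF_int x₀ hx₀)).smul _).aestronglyMeasurable
  · refine eventually_nhdsWithin_of_forall fun x hx ↦ ?_
    filter_upwards [h_lip] with a ha
    rw [slope_def_module, norm_smul, norm_inv, norm_eq_abs,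
      inv_mul_le_iff₀ (abs_pos.2 (sub_ne_zero.2 hx.2)), mul_comm]
    exact ha x hx.1
  · filter_upwards [h_diff] with a ha using hasDerivWithinAt_iff_tendsto_slope.1 ha

theorem integrable_exp_mul_of_ae_le [IsFiniteMeasure μ] {X : α → ℝ} {t C : ℝ}
    (hX : AEStronglyMeasurable X μ) (hC : ∀ᵐ a ∂μ, exp (t * X a) ≤ C) :
    Integrable (fun a ↦ exp (t * X a)) μ :=
  Integrable.of_bound (continuous_exp.comp_aestronglyMeasurable (hX.const_mul t)) C
    (hC.mono fun a ha ↦ by rwa [norm_eq_abs, abs_of_pos (exp_pos _)])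

theorem hasDerivWithinAt_mgf_of_ae_le [IsFiniteMeasure μ] {X : α → ℝ} {s : Set ℝ} {t C : ℝ}
    (hX : Integrable X μ) (hC : ∀ᵐ a ∂μ, ∀ u ∈ s, exp (u * X a) ≤ C) (ht : t ∈ s) :
    HasDerivWithinAt (mgf X μ) (μ[fun a ↦ X a * exp (t * X a)]) s t := by
  refine hasDerivWithinAt_integral_of_dominated_of_lip (bound := fun a ↦ C * |X a|)
    (fun u hu ↦ integrable_exp_mul_of_ae_le hX.1 (hC.mono fun a ha ↦ ha u hu)) ht ?_
    (hX.abs.const_mul C) (ae_of_all _ fun a ↦ ?_)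
  · filter_upwards [hC] with a ha u hu
    calc ‖exp (u * X a) - exp (t * X a)‖ ≤ C * |u * X a - t * X a| :=
          abs_exp_sub_exp_le (ha u hu) (ha t ht)
      _ = C * |X a| * |u - t| := by rw [← sub_mul, abs_mul]; ring
  · simpa [mul_comm] using ((hasDerivAt_mul_const (X a)).exp (x := t)).hasDerivWithinAt

theorem integral_abs_le_sqrt_integral_sq [IsProbabilityMeasure μ] {X : α → ℝ}
    (hX : MemLp X 2 μ) : ∫ a, |X a| ∂μ ≤ √(∫ a, |X a| ^ 2 ∂μ) := by
  have h := variance_nonneg |X| μ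
  rw [variance_eq_sub hX.abs, sub_nonneg] at h
  exact le_sqrt_of_sq_le h

theorem integral_pos_of_ae_pos [NeZero μ] {f : α → ℝ} (hf : Integrable f μ)
    (hpos : ∀ᵐ a ∂μ, 0 < f a) : 0 < ∫ a, f a ∂μ := by
  have hnonneg : 0 ≤ᵐ[μ] f := hpos.mono fun _ ha ↦ ha.le
  refine (integral_nonneg_of_ae hnonneg).lt_of_ne' fun h ↦ ?_
  rw [integral_eq_zero_iff_of_nonneg_ae hnonneg hf] at h
  obtain ⟨a, ha, ha₀⟩ := (hpos.and h).exists
  exact ha.ne' ha₀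

section Bounded

variable [IsFiniteMeasure μ] {f : α → ℝ} {M β : ℝ}

theorem integrable_of_ae_pos_of_ae_le (hf : AEMeasurable f μ) (hpos : ∀ᵐ a ∂μ, 0 < f a)
    (hle : ∀ᵐ a ∂μ, f a ≤ M) : Integrable f μ :=
  Integrable.of_bound hf.aestronglyMeasurable M <| by
    filter_upwards [hpos, hle] with a ha haM
    rwa [norm_eq_abs, abs_of_pos ha]

theorem integrable_rpow_of_ae_pos_of_ae_le (hf : AEMeasurable f μ) (hpos : ∀ᵐ a ∂μ, 0 < f a)
    (hle : ∀ᵐ a ∂μ, f a ≤ M) (hβ : 0 ≤ β) : Integrable (fun a ↦ f a ^ β) μ :=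
  Integrable.of_bound (hf.pow_const β).aestronglyMeasurable (M ^ β) <| by
    filter_upwards [hpos, hle] with a ha haM
    rw [norm_eq_abs, abs_of_pos (rpow_pos_of_pos ha β)]
    exact rpow_le_rpow ha.le haM hβ

theorem rpow_sub_one_mul_integral_le_integral_rpow (hf : AEMeasurable f μ)
    (hpos : ∀ᵐ a ∂μ, 0 < f a) (hle : ∀ᵐ a ∂μ, f a ≤ M) (hβ₀ : 0 ≤ β) (hβ₁ : β ≤ 1) :
    M ^ (β - 1) * ∫ a, f a ∂μ ≤ ∫ a, f a ^ β ∂μ := by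
  rw [← integral_const_mul]
  refine integral_mono_ae ((integrable_of_ae_pos_of_ae_le hf hpos hle).const_mul _)
    (integrable_rpow_of_ae_pos_of_ae_le hf hpos hle hβ₀) ?_
  filter_upwards [hpos, hle] with a ha haM using rpow_sub_one_mul_le_rpow ha haM hβ₁

theorem integral_mul_exp_div_integral_exp_le [NeZero μ] {g : α → ℝ} {c : ℝ} (hM : 0 < M)
    (hf : AEMeasurable f μ) (hpos : ∀ᵐ a ∂μ, 0 < f a) (hle : ∀ᵐ a ∂μ, f a ≤ M)
    (hβ₀ : 0 ≤ β) (hβ₁ : β ≤ 1) (hg : g = fun a ↦ log (f a) - c) (hg_int : Integrable g μ) :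
    (∫ a, g a * exp (β * g a) ∂μ) / (∫ a, exp (β * g a) ∂μ)
      ≤ M * (∫ a, |g a| ∂μ) / ∫ a, f a ∂μ := by
  set E := exp (-(β * c))
  have h_exp : ∀ᵐ a ∂μ, exp (β * g a) = E * f a ^ β := by
    filter_upwards [hpos] with a ha
    rw [hg, mul_sub, sub_eq_neg_add, exp_add, rpow_def_of_pos ha, mul_comm (log (f a))]
  have h_den : E * M ^ (β - 1) * ∫ a, f a ∂μ ≤ ∫ a, exp (β * g a) ∂μ := by
    rw [integral_congr_ae h_exp, integral_const_mul, mul_assoc]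
    exact mul_le_mul_of_nonneg_left
      (rpow_sub_one_mul_integral_le_integral_rpow hf hpos hle hβ₀ hβ₁) (exp_pos _).le
  have h_exp_le : ∀ᵐ a ∂μ, exp (β * g a) ≤ E * M ^ β := by
    filter_upwards [h_exp, hpos, hle] with a ha hfa hfaM
    rw [ha]
    gcongr
  have h_num : ∫ a, g a * exp (β * g a) ∂μ ≤ E * M ^ β * ∫ a, |g a| ∂μ := by
    rw [← integral_const_mul]
    refine integral_mono_ae
      (hg_int.mul_bdd (c := E * M ^ β)
        (continuous_exp.comp_aestronglyMeasurable (hg_int.1.const_mul β)) ?_)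
      (hg_int.abs.const_mul _) ?_
    · filter_upwards [h_exp_le] with a ha
      rwa [norm_eq_abs, abs_of_pos (exp_pos _)]
    · filter_upwards [h_exp_le] with a ha
      rw [mul_comm _ |g a|]
      exact mul_le_mul (le_abs_self _) ha (exp_pos _).le (abs_nonneg _)
  have hEM : 0 < E * M ^ (β - 1) := mul_pos (exp_pos _) (rpow_pos_of_pos hM _)
  have h_den_pos : 0 < E * M ^ (β - 1) * ∫ a, f a ∂μ :=
    mul_pos hEM (integral_pos_of_ae_pos (integrable_of_ae_pos_of_ae_le hf hpos hle) hpos)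
  have hE : E * M ^ β = E * M ^ (β - 1) * M := by
    rw [mul_assoc, ← rpow_add_one hM.ne', sub_add_cancel]
  calc (∫ a, g a * exp (β * g a) ∂μ) / (∫ a, exp (β * g a) ∂μ)
      ≤ E * M ^ β * (∫ a, |g a| ∂μ) / (E * M ^ (β - 1) * ∫ a, f a ∂μ) :=
        div_le_div₀ (by positivity) h_num h_den_pos h_den
    _ = M * (∫ a, |g a| ∂μ) / ∫ a, f a ∂μ := by
        rw [hE, mul_assoc (E * M ^ (β - 1)), mul_div_mul_left _ _ hEM.ne']

end Bounded

end MeasureTheory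

/-- For a probability measure `μ` and `0 < f ≤ M` a.e. (`M ≥ 1`) with
`log f ∈ L²(μ)`, with `α = ∫ log f dμ` and `g = log f − α`: for every `β ∈ [0,1]` the
function `β ↦ log ∫ e^{βg} dμ` has derivative `∫ g e^{βg} dμ / ∫ e^{βg} dμ` (within `[0,1]`),
this derivative is at most `M ‖g‖₂ / ‖f‖₁`, and `∫ f^β dμ ≥ M^{β−1} ‖f‖₁`. -/
theorem stmt12 {Ω : Type*} [MeasurableSpace Ω] (μ : Measure Ω) [IsProbabilityMeasure μ]
    (f : Ω → ℝ) (M : ℝ) (hM : 1 ≤ M)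
    (hmeas : Measurable f)
    (hpos : ∀ᵐ x ∂μ, 0 < f x) (hle : ∀ᵐ x ∂μ, f x ≤ M)
    (hL2 : MemLp (fun x => Real.log (f x)) 2 μ)
    (g : Ω → ℝ) (hg : g = fun x => Real.log (f x) - ∫ y, Real.log (f y) ∂μ) :
    ∀ β ∈ Set.Icc (0:ℝ) 1,
      HasDerivWithinAt (fun b : ℝ => Real.log (∫ x, Real.exp (b * g x) ∂μ))
        ((∫ x, g x * Real.exp (β * g x) ∂μ) / (∫ x, Real.exp (β * g x) ∂μ))
        (Set.Icc 0 1) β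
      ∧ (∫ x, g x * Real.exp (β * g x) ∂μ) / (∫ x, Real.exp (β * g x) ∂μ)
          ≤ M * (∫ x, |g x| ^ 2 ∂μ) ^ (1/2 : ℝ) / (∫ x, |f x| ∂μ)
      ∧ M ^ (β - 1) * (∫ x, |f x| ∂μ) ≤ ∫ x, f x ^ β ∂μ := by
  intro β ⟨hβ₀, hβ₁⟩
  have hg_L2 : MemLp g 2 μ := hg ▸ hL2.sub (memLp_const _)
  have hg_int : Integrable g μ := hg_L2.integrable one_le_two
  have h_exp_le : ∀ᵐ x ∂μ, ∀ t ∈ Set.Icc (0:ℝ) 1,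
      exp (t * g x) ≤ exp (log M + |∫ y, log (f y) ∂μ|) := by
    filter_upwards [hpos, hle] with x hx hxM t ht
    rw [hg]
    exact exp_mul_log_sub_le hx hxM hM ht.1 ht.2
  have h_mgf_pos : 0 < mgf g μ β :=
    mgf_pos (integrable_exp_mul_of_ae_le hg_int.1 (h_exp_le.mono fun x hx ↦ hx β ⟨hβ₀, hβ₁⟩))
  have h_abs_f : ∫ x, |f x| ∂μ = ∫ x, f x ∂μ :=
    integral_congr_ae (hpos.mono fun x hx ↦ abs_of_pos hx)
  refine ⟨(hasDerivWithinAt_mgf_of_ae_le hg_int h_exp_le ⟨hβ₀, hβ₁⟩).log h_mgf_pos.ne', ?_, ?_⟩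
  · rw [h_abs_f, ← sqrt_eq_rpow]
    calc _ ≤ M * (∫ x, |g x| ∂μ) / ∫ x, f x ∂μ :=
          integral_mul_exp_div_integral_exp_le (by linarith) hmeas.aemeasurable hpos hle hβ₀ hβ₁
            hg hg_int
      _ ≤ M * √(∫ x, |g x| ^ 2 ∂μ) / ∫ x, f x ∂μ :=
          div_le_div_of_nonneg_right
            (mul_le_mul_of_nonneg_left (integral_abs_le_sqrt_integral_sq hg_L2) (by linarith))
            (integral_nonneg_of_ae (hpos.mono fun _ hx ↦ hx.le))
  · rw [h_abs_f]
    exact rpow_sub_one_mul_integral_le_integral_rpow hmeas.aemeasurable hpos hle hβ₀ hβ₁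
end

section
/- Let 1 < β < 5/3 and c > 0, and let p : B₁ × (−1,0) → ℝ be measurable with ∫_{B₁} |x|^{−β} |p(x,t)|² dx ≤ c + c|t|^{−(1+β)/2} for almost every t ∈ (−1,0). Then there is a constant C depending only on c and β such that ∫_{−1}^0 ∫_{B₁} |p(x,t)|^{3/2} dx dt ≤ C. -/
noncomputable section
open MeasureTheory Set

abbrev E3 : Type := EuclideanSpace ℝ (Fin 3)

open scoped ENNReal

/-!
Hölder's inequality in `x` with exponents `4/3` and `4`, applied to
`|p|^{3/2} = (|x|^{-β} p²)^{3/4} · |x|^{3β/4}`, bounds the spatial integral at time `t` by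
`(c + c|t|^{-(1+β)/2})^{3/4} |B₁|^{1/4} ≲ |t|^{-3(1+β)/8}`, and this is integrable on `(-1, 0)`
exactly because `3(1+β)/8 < 1`, i.e. `β < 5/3`.
-/

theorem intervalIntegrable_abs_rpow {s : ℝ} (hs : -1 < s) (a b : ℝ) :
    IntervalIntegrable (fun t : ℝ => |t| ^ s) volume a b := by
  have hpos : ∀ c : ℝ, 0 ≤ c → IntervalIntegrable (fun t : ℝ => |t| ^ s) volume 0 c := by
    intro c hc
    refine (intervalIntegral.intervalIntegrable_rpow' hs).congr fun t ht => ?_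
    rw [uIoc_of_le hc] at ht
    simp only [abs_of_pos ht.1]
  have hzero : ∀ c : ℝ, IntervalIntegrable (fun t : ℝ => |t| ^ s) volume 0 c := by
    intro c
    rcases le_total 0 c with hc | hc
    · exact hpos c hc
    · simpa using (IntervalIntegrable.iff_comp_neg (by simp)).1 (hpos (-c) (by linarith))
  exact (hzero a).symm.trans (hzero b)

theorem lintegral_abs_rpow_le_weighted {α : Type*} [MeasurableSpace α] {μ : Measure α}
    {q : ℝ} (hq0 : 0 < q) (hq2 : q < 2) {f w : α → ℝ}
    (hf : AEMeasurable f μ) (hw : AEMeasurable w μ) (hw0 : ∀ᵐ x ∂μ, 0 < w x) :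
    ∫⁻ x, ENNReal.ofReal (|f x| ^ q) ∂μ ≤
      (∫⁻ x, ENNReal.ofReal ((w x)⁻¹ * f x ^ 2) ∂μ) ^ (q / 2) *
        (∫⁻ x, ENNReal.ofReal (w x ^ (q / (2 - q))) ∂μ) ^ ((2 - q) / 2) := by
  have hpq : (2 / q).HolderConjugate (2 / (2 - q)) := by
    rw [Real.holderConjugate_iff]
    refine ⟨by rw [lt_div_iff₀ hq0]; linarith, ?_⟩
    field_simp
    ring
  set F : α → ℝ≥0∞ := fun x => ENNReal.ofReal ((w x)⁻¹ * f x ^ 2) ^ (q / 2)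
  set G : α → ℝ≥0∞ := fun x => ENNReal.ofReal (w x) ^ (q / 2)
  have hFG : ∀ᵐ x ∂μ, ENNReal.ofReal (|f x| ^ q) = (F * G) x := by
    filter_upwards [hw0] with x hx
    have hprod : (w x)⁻¹ * f x ^ 2 * w x = |f x| ^ (2 : ℝ) := by
      rw [Real.rpow_two, sq_abs]
      field_simp
    simp only [Pi.mul_apply, F, G]
    rw [ENNReal.ofReal_rpow_of_nonneg (by positivity) (by positivity),
      ENNReal.ofReal_rpow_of_nonneg hx.le (by positivity), ← ENNReal.ofReal_mul (by positivity),
      ← Real.mul_rpow (by positivity) hx.le, hprod, ← Real.rpow_mul (abs_nonneg _)]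
    congr 2
    ring
  have hF : ∀ x, F x ^ (2 / q) = ENNReal.ofReal ((w x)⁻¹ * f x ^ 2) := fun x => by
    rw [← ENNReal.rpow_mul, show q / 2 * (2 / q) = 1 by field_simp, ENNReal.rpow_one]
  have hG : ∀ᵐ x ∂μ, G x ^ (2 / (2 - q)) = ENNReal.ofReal (w x ^ (q / (2 - q))) := by
    filter_upwards [hw0] with x hx
    have hq2' : 0 < 2 - q := by linarith
    rw [← ENNReal.rpow_mul, show q / 2 * (2 / (2 - q)) = q / (2 - q) by field_simp,
      ENNReal.ofReal_rpow_of_nonneg hx.le (by positivity)]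
  calc ∫⁻ x, ENNReal.ofReal (|f x| ^ q) ∂μ = ∫⁻ x, (F * G) x ∂μ := lintegral_congr_ae hFG
    _ ≤ (∫⁻ x, F x ^ (2 / q) ∂μ) ^ (1 / (2 / q)) *
          (∫⁻ x, G x ^ (2 / (2 - q)) ∂μ) ^ (1 / (2 / (2 - q))) :=
      ENNReal.lintegral_mul_le_Lp_mul_Lq μ hpq (by fun_prop) (by fun_prop)
    _ = _ := by simp only [hF, lintegral_congr_ae hG, one_div_div]

theorem setLIntegral_ball_abs_rpow_le {E : Type*} [NormedAddCommGroup E] [MeasurableSpace E]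
    [BorelSpace E] (μ : Measure E) [NullSingletonClass μ] {q β : ℝ} (hq0 : 0 < q) (hq2 : q < 2)
    (hβ : 0 ≤ β) {f : E → ℝ} (hf : AEMeasurable f (μ.restrict (Metric.ball 0 1))) :
    ∫⁻ x in Metric.ball 0 1, ENNReal.ofReal (|f x| ^ q) ∂μ ≤
      (∫⁻ x in Metric.ball 0 1, ENNReal.ofReal (‖x‖ ^ (-β) * f x ^ 2) ∂μ) ^ (q / 2) *
        μ (Metric.ball 0 1) ^ ((2 - q) / 2) := by
  have hweight : ∀ᵐ x ∂μ.restrict (Metric.ball 0 1), 0 < ‖x‖ ^ β := by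
    filter_upwards [ae_restrict_of_ae (μ.ae_ne 0)] with x hx
    exact Real.rpow_pos_of_pos (norm_pos_iff.2 hx) β
  have hweight_pow_le : ∫⁻ x in Metric.ball 0 1, ENNReal.ofReal ((‖x‖ ^ β) ^ (q / (2 - q))) ∂μ ≤
      μ (Metric.ball 0 1) := by
    have hq2' : 0 < 2 - q := by linarith
    refine (setLIntegral_mono' measurableSet_ball fun x hx => ?_).trans_eq (setLIntegral_one _)
    refine ENNReal.ofReal_le_one.2 (Real.rpow_le_one (by positivity) ?_ (by positivity))
    exact Real.rpow_le_one (norm_nonneg x) (mem_ball_zero_iff.1 hx).le hβ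
  calc ∫⁻ x in Metric.ball 0 1, ENNReal.ofReal (|f x| ^ q) ∂μ
      ≤ (∫⁻ x in Metric.ball 0 1, ENNReal.ofReal ((‖x‖ ^ β)⁻¹ * f x ^ 2) ∂μ) ^ (q / 2) *
        (∫⁻ x in Metric.ball 0 1, ENNReal.ofReal ((‖x‖ ^ β) ^ (q / (2 - q))) ∂μ) ^ ((2 - q) / 2) :=
      lintegral_abs_rpow_le_weighted hq0 hq2 hf (by fun_prop) hweight
    _ ≤ _ := by
      simp only [← Real.rpow_neg (norm_nonneg _)]
      gcongr

theorem lintegral_Ioo_ofReal_add_mul_abs_rpow_neg_rpow_lt_top {c γ r : ℝ} (hc : 0 ≤ c)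
    (hγ : 0 ≤ γ) (hr : 0 ≤ r) (hγr : γ * r < 1) :
    ∫⁻ t in Ioo (-1 : ℝ) 0, ENNReal.ofReal (c + c * |t| ^ (-γ)) ^ r < ∞ := by
  have hint : IntegrableOn (fun t : ℝ => (2 * c) ^ r * |t| ^ (-(γ * r))) (Ioo (-1) 0) :=
    ((intervalIntegrable_iff_integrableOn_Ioo_of_le (by norm_num)).1
      (intervalIntegrable_abs_rpow (by linarith) _ _)).const_mul _
  refine lt_of_le_of_lt (setLIntegral_mono' measurableSet_Ioo fun t ht => ?_) hint.lintegral_lt_top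
  have ht0 : 0 < |t| := abs_pos.2 ht.2.ne
  have ht1 : |t| ≤ 1 := abs_le.2 ⟨ht.1.le, ht.2.le.trans zero_le_one⟩
  have hsing : 1 ≤ |t| ^ (-γ) := Real.one_le_rpow_of_pos_of_le_one_of_nonpos ht0 ht1 (by linarith)
  calc ENNReal.ofReal (c + c * |t| ^ (-γ)) ^ r ≤ ENNReal.ofReal (2 * c * |t| ^ (-γ)) ^ r := by
        gcongr
        nlinarith
    _ = ENNReal.ofReal ((2 * c) ^ r * |t| ^ (-(γ * r))) := by
        rw [ENNReal.ofReal_rpow_of_nonneg (by positivity) hr, Real.mul_rpow (by positivity)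
          (by positivity), ← Real.rpow_mul ht0.le, neg_mul]

/-- A weighted bound `∫_{B₁} |x|^{−β} p(x,t)² dx ≤ c + c|t|^{−(1+β)/2}`
for a.e. `t ∈ (−1,0)`, with `1 < β < 5/3`, implies `p ∈ L^{3/2}(B₁ × (−1,0))`. -/
theorem stmt17 (β c : ℝ) (hβ1 : 1 < β) (hβ2 : β < 5/3) (hc : 0 < c) :
    ∃ C : ℝ, 0 < C ∧ ∀ p : E3 → ℝ → ℝ,
      Measurable (fun q : E3 × ℝ => p q.1 q.2) →
      (∀ᵐ t ∂(volume.restrict (Ioo (-1:ℝ) 0)),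
        (∫⁻ x in Metric.ball (0:E3) 1, ENNReal.ofReal (‖x‖ ^ (-β) * p x t ^ 2))
          ≤ ENNReal.ofReal (c + c * |t| ^ (-(1 + β) / 2))) →
      (∫⁻ t in Ioo (-1:ℝ) 0, ∫⁻ x in Metric.ball (0:E3) 1,
          ENNReal.ofReal (|p x t| ^ (3/2 : ℝ)))
        ≤ ENNReal.ofReal C := by
  set K := ∫⁻ t in Ioo (-1 : ℝ) 0, ENNReal.ofReal (c + c * |t| ^ (-(1 + β) / 2)) ^ (3 / 4 : ℝ)
  set V := volume (Metric.ball (0 : E3) 1) ^ (1 / 4 : ℝ)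
  have hK : K ≠ ∞ := by
    simp only [K, neg_div]
    exact (lintegral_Ioo_ofReal_add_mul_abs_rpow_neg_rpow_lt_top hc.le (by linarith)
      (by norm_num) (by linarith)).ne
  have hV : V ≠ ∞ := ENNReal.rpow_ne_top_of_nonneg (by norm_num) measure_ball_lt_top.ne
  refine ⟨(K * V).toReal + 1, by positivity, fun p hp hbound => ?_⟩
  have hslice (t : ℝ) :
      ∫⁻ x in Metric.ball (0 : E3) 1, ENNReal.ofReal (|p x t| ^ (3 / 2 : ℝ)) ≤
        (∫⁻ x in Metric.ball (0 : E3) 1, ENNReal.ofReal (‖x‖ ^ (-β) * p x t ^ 2)) ^ (3 / 4 : ℝ) *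
          V := by
    convert setLIntegral_ball_abs_rpow_le volume (q := 3 / 2) (f := fun x => p x t)
      (by norm_num) (by norm_num) (by linarith : 0 ≤ β)
      (hp.comp (measurable_id.prodMk measurable_const)).aemeasurable using 3 <;> norm_num
  calc ∫⁻ t in Ioo (-1 : ℝ) 0, ∫⁻ x in Metric.ball (0 : E3) 1,
          ENNReal.ofReal (|p x t| ^ (3 / 2 : ℝ))
      ≤ ∫⁻ t in Ioo (-1 : ℝ) 0,
          ENNReal.ofReal (c + c * |t| ^ (-(1 + β) / 2)) ^ (3 / 4 : ℝ) * V := by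
        refine lintegral_mono_ae ?_
        filter_upwards [hbound] with t ht
        exact (hslice t).trans (by gcongr)
    _ = K * V := lintegral_mul_const' _ _ hV
    _ ≤ ENNReal.ofReal ((K * V).toReal + 1) := by
        rw [← ENNReal.ofReal_toReal (ENNReal.mul_ne_top hK hV)]
        exact ENNReal.ofReal_le_ofReal (by simp)
end
end

section
/- Let S < T, X₃ ∈ ℝ, and constants C₀, c₀, C₁ > 0. Let P : ℝ³ → [0, ∞) be measurable with ∫_{ℝ³} P(Y) dY = 1 and P(Y) ≤ C₀ (T−S)^{−3/2} exp(−c₀ |X₃ − Y₃| / (T−S)) for all Y = (Y₁,Y₂,Y₃), and let f : ℝ³ → ℝ be measurable with |f(Y)| ≤ C₁ (1 + R_Y)^{−1}, where R_Y = √(Y₁²+Y₂²). Then there is a constant C depending only on C₀, c₀, C₁ such that ∫_{ℝ³} P(Y) |f(Y)| dY ≤ C (T−S)^{−1/6}. -/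
noncomputable section
open MeasureTheory Set

/-- distance to the x₃-axis. -/
def rr (x : E3) : ℝ := Real.sqrt (x 0 ^ 2 + x 1 ^ 2)

/-!
Split space along the cylinder `R_Y ≤ r`. Off the cylinder `|f| ≤ C₁ / (1 + r)`, and since `P` has
mass one this part contributes at most `C₁ / r`. On the cylinder `|f| ≤ C₁`, and the cylinder lies in
the slab `[-r, r]² × ℝ`, over which the bound on `P` integrates to
`C₀ (T-S)^{-3/2} · (2r)² · 2(T-S)/c₀`. The radius `r = (T-S)^{1/6}` makes both terms of order
`(T-S)^{-1/6}`.
-/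

open scoped ENNReal

theorem MeasureTheory.lintegral_fin_nat_prod_eq_prod {n : ℕ} {E : Type*}
    [MeasurableSpace E] {μ : Fin n → Measure E} [∀ i, SigmaFinite (μ i)]
    {f : Fin n → E → ℝ≥0∞} (hf : ∀ i, Measurable (f i)) :
    ∫⁻ x, ∏ i, f i (x i) ∂(Measure.pi μ) = ∏ i, ∫⁻ x, f i x ∂(μ i) := by
  induction n with
  | zero => simp
  | succ n ih =>
    rw [← ((measurePreserving_piFinSuccAbove μ 0).symm).lintegral_comp (by fun_prop)]
    simp_rw [MeasurableEquiv.piFinSuccAbove_symm_apply, Fin.insertNthEquiv,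
      Fin.prod_univ_succ, Fin.insertNth_zero, Equiv.coe_fn_mk, Fin.cons_succ,
      Fin.zero_succAbove, cast_eq, Fin.cons_zero]
    have h_tail : Measurable fun y : Fin n → E => ∏ i, f i.succ (y i) :=
      Finset.measurable_prod _ fun i _ => (hf i.succ).comp (measurable_pi_apply i)
    rw [lintegral_prod_mul (hf 0).aemeasurable h_tail.aemeasurable, ih fun i => hf i.succ]

theorem EuclideanSpace.lintegral_prod_eq_prod {n : ℕ} {f : Fin n → ℝ → ℝ≥0∞}
    (hf : ∀ i, Measurable (f i)) :
    ∫⁻ x : EuclideanSpace ℝ (Fin n), ∏ i, f i (x i) = ∏ i, ∫⁻ t, f i t := by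
  rw [← (PiLp.volume_preserving_toLp (Fin n)).lintegral_comp (by fun_prop)]
  exact lintegral_fin_nat_prod_eq_prod hf

lemma abs_apply_zero_le_rr (x : E3) : |x 0| ≤ rr x :=
  Real.abs_le_sqrt (le_add_of_nonneg_right (sq_nonneg _))

lemma abs_apply_one_le_rr (x : E3) : |x 1| ≤ rr x :=
  Real.abs_le_sqrt (le_add_of_nonneg_left (sq_nonneg _))

lemma rr_nonneg (x : E3) : 0 ≤ rr x := Real.sqrt_nonneg _

open ProbabilityTheory in
theorem lintegral_exp_neg_mul_abs_sub_le {a : ℝ} (ha : 0 < a) (c : ℝ) :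
    ∫⁻ x, ENNReal.ofReal (Real.exp (-(a * |c - x|))) ≤ ENNReal.ofReal (2 / a) := by
  rw [(Measure.measurePreserving_sub_left volume c).lintegral_comp
    (f := fun x => ENNReal.ofReal (Real.exp (-(a * |x|)))) (by fun_prop)]
  have hpdf : Measurable (exponentialPDF a) := (measurable_exponentialPDFReal a).ennreal_ofReal
  -- `exp (-a|x|)` is `a⁻¹` times the sum of the exponential densities at `x` and `-x`
  have h_exp_eq : ∀ y, 0 ≤ y →
      ENNReal.ofReal (Real.exp (-(a * y))) = ENNReal.ofReal a⁻¹ * exponentialPDF a y := by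
    intro y hy
    rw [exponentialPDF_of_nonneg hy, ← ENNReal.ofReal_mul (by positivity), ← mul_assoc,
      inv_mul_cancel₀ ha.ne', one_mul]
  have h_exp_le : ∀ x : ℝ, ENNReal.ofReal (Real.exp (-(a * |x|)))
      ≤ ENNReal.ofReal a⁻¹ * (exponentialPDF a x + exponentialPDF a (-x)) := by
    intro x
    rcases le_or_gt 0 x with hx | hx
    · rw [abs_of_nonneg hx, h_exp_eq x hx]
      gcongr
      exact le_self_add
    · rw [abs_of_neg hx, h_exp_eq (-x) (by linarith)]
      gcongr
      exact le_add_self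
  calc ∫⁻ x, ENNReal.ofReal (Real.exp (-(a * |x|)))
      ≤ ∫⁻ x, ENNReal.ofReal a⁻¹ * (exponentialPDF a x + exponentialPDF a (-x)) :=
        lintegral_mono h_exp_le
    _ = ENNReal.ofReal a⁻¹ * 2 := by
        rw [lintegral_const_mul' _ _ ENNReal.ofReal_ne_top, lintegral_add_left hpdf,
          (Measure.measurePreserving_neg volume).lintegral_comp hpdf,
          lintegral_exponentialPDF_eq_one ha, one_add_one_eq_two]
    _ = ENNReal.ofReal (2 / a) := by
        rw [div_eq_inv_mul, ENNReal.ofReal_mul (by positivity), ENNReal.ofReal_ofNat]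

lemma abs_le_div_one_add_of_le {φ C₁ ρ s : ℝ} (hC₁ : 0 ≤ C₁) (hs : 0 ≤ s) (hsρ : s ≤ ρ)
    (hφ : |φ| ≤ C₁ * (1 + ρ)⁻¹) : |φ| ≤ C₁ / (1 + s) :=
  hφ.trans (by rw [div_eq_mul_inv]; gcongr)

lemma ofReal_mul_abs_le_cylinder_split {P f : E3 → ℝ} {A a C₁ X₃ r : ℝ} (hA : 0 ≤ A)
    (hC₁ : 0 ≤ C₁) (hr : 0 ≤ r) (hP₀ : ∀ Y, 0 ≤ P Y)
    (hPA : ∀ Y : E3, P Y ≤ A * Real.exp (-(a * |X₃ - Y 2|)))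
    (hf : ∀ Y : E3, |f Y| ≤ C₁ * (1 + rr Y)⁻¹) (Y : E3) :
    ENNReal.ofReal (P Y * |f Y|) ≤ ENNReal.ofReal (C₁ / (1 + r) * P Y)
      + ENNReal.ofReal (C₁ * A) * ((Icc (-r) r).indicator 1 (Y 0) *
        (Icc (-r) r).indicator 1 (Y 1) * ENNReal.ofReal (Real.exp (-(a * |X₃ - Y 2|)))) := by
  by_cases hY : rr Y ≤ r
  · have hf_le : |f Y| ≤ C₁ := by
      simpa using abs_le_div_one_add_of_le hC₁ le_rfl (rr_nonneg Y) (hf Y)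
    have h_box : ∀ i, |Y i| ≤ rr Y → (Icc (-r) r).indicator (1 : ℝ → ℝ≥0∞) (Y i) = 1 :=
      fun i hi => indicator_of_mem (s := Icc (-r) r) (abs_le.mp (hi.trans hY)) 1
    rw [h_box 0 (abs_apply_zero_le_rr Y), h_box 1 (abs_apply_one_le_rr Y), one_mul, one_mul,
      ← ENNReal.ofReal_mul (by positivity)]
    refine le_add_left (ENNReal.ofReal_le_ofReal ?_)
    calc P Y * |f Y| ≤ A * Real.exp (-(a * |X₃ - Y 2|)) * C₁ :=
          mul_le_mul (hPA Y) hf_le (abs_nonneg _) (by positivity)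
      _ = C₁ * A * Real.exp (-(a * |X₃ - Y 2|)) := by ring
  · have hf_le := abs_le_div_one_add_of_le hC₁ hr (not_le.mp hY).le (hf Y)
    refine le_add_right (ENNReal.ofReal_le_ofReal ?_)
    rw [mul_comm _ (P Y)]
    exact mul_le_mul_of_nonneg_left hf_le (hP₀ Y)

theorem lintegral_mul_abs_le_of_cylinder_split {P f : E3 → ℝ} {A a C₁ X₃ r : ℝ} (hA : 0 ≤ A)
    (ha : 0 < a) (hC₁ : 0 ≤ C₁) (hr : 0 ≤ r) (hP : Measurable P) (hP₀ : ∀ Y, 0 ≤ P Y)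
    (hP₁ : ∫⁻ Y, ENNReal.ofReal (P Y) ≤ 1)
    (hPA : ∀ Y : E3, P Y ≤ A * Real.exp (-(a * |X₃ - Y 2|)))
    (hf : ∀ Y : E3, |f Y| ≤ C₁ * (1 + rr Y)⁻¹) :
    ∫⁻ Y, ENNReal.ofReal (P Y * |f Y|)
      ≤ ENNReal.ofReal (C₁ / (1 + r) + C₁ * A * (2 * r) ^ 2 * (2 / a)) := by
  set box : ℝ → ℝ≥0∞ := (Icc (-r) r).indicator 1
  set g : Fin 3 → ℝ → ℝ≥0∞ := ![box, box, fun t => ENNReal.ofReal (Real.exp (-(a * |X₃ - t|)))]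
  have hg : ∀ i, Measurable (g i) := by
    intro i
    fin_cases i
    · exact measurable_one.indicator measurableSet_Icc
    · exact measurable_one.indicator measurableSet_Icc
    · show Measurable fun t : ℝ => ENNReal.ofReal (Real.exp (-(a * |X₃ - t|)))
      fun_prop
  have hG : Measurable fun Y : E3 => ∏ i, g i (Y i) :=
    Finset.measurable_prod _ fun i _ => (hg i).comp (by fun_prop)
  have h_box : ∫⁻ t, box t = ENNReal.ofReal (2 * r) := by
    rw [lintegral_indicator_one measurableSet_Icc, Real.volume_Icc]
    ring_nf
  have h_first : ∫⁻ Y, ENNReal.ofReal (C₁ / (1 + r) * P Y) ≤ ENNReal.ofReal (C₁ / (1 + r)) := by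
    simp_rw [ENNReal.ofReal_mul (by positivity : 0 ≤ C₁ / (1 + r))]
    rw [lintegral_const_mul _ hP.ennreal_ofReal]
    exact mul_le_of_le_one_right' hP₁
  have h_second : ∫⁻ Y : E3, ∏ i, g i (Y i) ≤ ENNReal.ofReal ((2 * r) ^ 2 * (2 / a)) := by
    rw [EuclideanSpace.lintegral_prod_eq_prod hg, Fin.prod_univ_three]
    change (∫⁻ t, box t) * (∫⁻ t, box t) * ∫⁻ t, ENNReal.ofReal (Real.exp (-(a * |X₃ - t|))) ≤ _
    rw [h_box, ← ENNReal.ofReal_mul (by positivity), ← sq, ENNReal.ofReal_mul (by positivity)]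
    exact mul_le_mul_right (lintegral_exp_neg_mul_abs_sub_le ha X₃) _
  calc ∫⁻ Y, ENNReal.ofReal (P Y * |f Y|)
      ≤ ∫⁻ Y, ENNReal.ofReal (C₁ / (1 + r) * P Y)
          + ENNReal.ofReal (C₁ * A) * ∏ i, g i (Y i) := by
        refine lintegral_mono fun Y => ?_
        simpa [Fin.prod_univ_three, g] using
          ofReal_mul_abs_le_cylinder_split hA hC₁ hr hP₀ hPA hf Y
    _ = (∫⁻ Y, ENNReal.ofReal (C₁ / (1 + r) * P Y))
          + ENNReal.ofReal (C₁ * A) * ∫⁻ Y : E3, ∏ i, g i (Y i) := by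
        rw [lintegral_add_left (hP.const_mul _).ennreal_ofReal, lintegral_const_mul _ hG]
    _ ≤ ENNReal.ofReal (C₁ / (1 + r))
          + ENNReal.ofReal (C₁ * A) * ENNReal.ofReal ((2 * r) ^ 2 * (2 / a)) :=
        add_le_add h_first (by gcongr)
    _ = _ := by
        rw [← ENNReal.ofReal_mul (by positivity),
          ← ENNReal.ofReal_add (by positivity) (by positivity)]
        ring_nf

lemma div_one_add_rpow_add_le_mul_rpow {C₀ c₀ C₁ τ : ℝ} (hC₁ : 0 ≤ C₁) (hτ : 0 < τ) :
    C₁ / (1 + τ ^ (1/6 : ℝ)) + C₁ * (C₀ * τ ^ (-3/2 : ℝ)) * (2 * τ ^ (1/6 : ℝ)) ^ 2 * (2 / (c₀ / τ))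
      ≤ (C₁ + 8 * C₁ * C₀ / c₀) * τ ^ (-1/6 : ℝ) := by
  set r := τ ^ (1/6 : ℝ) with hr_def
  have hr : 0 < r := by positivity
  have h_inv : τ ^ (-1/6 : ℝ) = r⁻¹ := by
    rw [show (-1/6 : ℝ) = -(1/6) by norm_num, Real.rpow_neg hτ.le]
  have h_pow : τ ^ (-3/2 : ℝ) * r ^ 2 * τ = r⁻¹ := by
    rw [← h_inv, hr_def, ← Real.rpow_natCast, ← Real.rpow_mul hτ.le, ← Real.rpow_add hτ,
      ← Real.rpow_add_one hτ.ne']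
    norm_num
  have h_first : C₁ / (1 + r) ≤ C₁ * r⁻¹ := by
    rw [← div_eq_mul_inv]
    exact div_le_div_of_nonneg_left hC₁ hr (by linarith)
  calc C₁ / (1 + r) + C₁ * (C₀ * τ ^ (-3/2 : ℝ)) * (2 * r) ^ 2 * (2 / (c₀ / τ))
      = C₁ / (1 + r) + 8 * C₁ * C₀ / c₀ * (τ ^ (-3/2 : ℝ) * r ^ 2 * τ) := by
        rw [div_div_eq_mul_div]; ring
    _ ≤ (C₁ + 8 * C₁ * C₀ / c₀) * τ ^ (-1/6 : ℝ) := by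
        rw [h_pow, h_inv, add_mul]; linarith

/-- For a kernel `P ≥ 0` with `∫ P = 1` and
`P(Y) ≤ C₀ (T−S)^{−3/2} e^{−c₀|X₃−Y₃|/(T−S)}`, and `|f(Y)| ≤ C₁ (1+R_Y)^{−1}`,
one has `∫ P |f| ≤ C (T−S)^{−1/6}`. -/
theorem stmt18 (C₀ c₀ C₁ : ℝ) (h0 : 0 < C₀) (h1 : 0 < c₀) (h2 : 0 < C₁) :
    ∃ C : ℝ, 0 < C ∧ ∀ S T X₃ : ℝ, S < T → ∀ P f : E3 → ℝ,
      Measurable P → Measurable f → (∀ Y, 0 ≤ P Y) →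
      (∫⁻ Y : E3, ENNReal.ofReal (P Y)) = 1 →
      (∀ Y : E3, P Y ≤ C₀ * (T - S) ^ (-3/2 : ℝ) * Real.exp (-c₀ * |X₃ - Y 2| / (T - S))) →
      (∀ Y : E3, |f Y| ≤ C₁ * (1 + rr Y)⁻¹) →
      (∫⁻ Y : E3, ENNReal.ofReal (P Y * |f Y|))
        ≤ ENNReal.ofReal (C * (T - S) ^ (-1/6 : ℝ)) := by
  refine ⟨C₁ + 8 * C₁ * C₀ / c₀, by positivity, ?_⟩
  intro S T X₃ hST P f hP _ hP₀ hP₁ hPA hf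
  have hτ : 0 < T - S := sub_pos.mpr hST
  have hPA' : ∀ Y : E3,
      P Y ≤ C₀ * (T - S) ^ (-3/2 : ℝ) * Real.exp (-(c₀ / (T - S) * |X₃ - Y 2|)) := fun Y => by
    convert hPA Y using 3; ring
  calc (∫⁻ Y : E3, ENNReal.ofReal (P Y * |f Y|))
      ≤ ENNReal.ofReal (C₁ / (1 + (T - S) ^ (1/6 : ℝ)) + C₁ * (C₀ * (T - S) ^ (-3/2 : ℝ))
          * (2 * (T - S) ^ (1/6 : ℝ)) ^ 2 * (2 / (c₀ / (T - S)))) :=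
        lintegral_mul_abs_le_of_cylinder_split (by positivity) (by positivity) h2.le
          (by positivity) hP hP₀ hP₁.le hPA' hf
    _ ≤ _ := ENNReal.ofReal_le_ofReal (div_one_add_rpow_add_le_mul_rpow h2.le hτ)
end
end

section
/- Let 0 < α < 1, M ≥ 1, c > 0, S < T, and X₃ ∈ ℝ. Then there is a constant C depending only on c and α such that ∫_S^T ∫_ℝ ∫_0^∞ (T−τ)^{−3/2} exp(−c |X₃ − Z| / (T−τ)) · R / (R^{3−α} M^α + 1) dR dZ dτ ≤ C (T−S)^{1/2} M^{−2α/3}. -/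
/-!
The integrand factors into a function of `T - τ` and `Z` times a function of `R`, so the triple
integral is a product. The radial integral is split at the scale `R₀ = A^{-1/p}` where
`R^p A = 1` (here `p = 3 - α`, `A = M^α`): below it the integrand is at most `R₀`, above it at
most `R^{1-p}/A`, giving `O(A^{-2/p}) ≤ O(M^{-2α/3})`. For fixed `t = T - τ` the `Z`-integral of
`t^{-3/2} e^{-c|X₃ - Z|/t}` is `(2/c) t^{-1/2}`, whose `τ`-integral is `(4/c) (T - S)^{1/2}`.
-/

open MeasureTheory Set

lemma lintegral_ofReal_eq_of_integral_eq {X : Type*} [MeasurableSpace X] {μ : Measure X}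
    {f : X → ℝ} {a : ℝ} (hf : 0 ≤ᵐ[μ] f) (h : ∫ x, f x ∂μ = a) (ha : a ≠ 0) :
    ∫⁻ x, ENNReal.ofReal (f x) ∂μ = ENNReal.ofReal a := by
  rw [← ofReal_integral_eq_lintegral_ofReal (Integrable.of_integral_ne_zero (h ▸ ha)) hf, h]

lemma integral_exp_neg_mul_abs {b : ℝ} (hb : 0 < b) : ∫ x, Real.exp (-b * |x|) = 2 / b := by
  rw [integral_comp_abs (f := fun x ↦ Real.exp (-b * x)),
    integral_exp_mul_Ioi (neg_neg_of_pos hb)]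
  field_simp
  simp

lemma lintegral_exp_neg_mul_abs_sub {b : ℝ} (hb : 0 < b) (x : ℝ) :
    ∫⁻ z, ENNReal.ofReal (Real.exp (-b * |x - z|)) = ENNReal.ofReal (2 / b) := by
  rw [lintegral_sub_left_eq_self (fun z ↦ ENNReal.ofReal (Real.exp (-b * |z|))) x]
  exact lintegral_ofReal_eq_of_integral_eq (ae_of_all _ fun _ ↦ (Real.exp_pos _).le)
    (integral_exp_neg_mul_abs hb) (by positivity)

lemma setLIntegral_Ioo_sub_rpow {r : ℝ} (hr : -1 < r) {S T : ℝ} (hST : S < T) :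
    ∫⁻ τ in Ioo S T, ENNReal.ofReal ((T - τ) ^ r)
      = ENNReal.ofReal ((T - S) ^ (r + 1) / (r + 1)) := by
  have hr1 : 0 < r + 1 := by linarith
  refine lintegral_ofReal_eq_of_integral_eq ?_ ?_ (by have := sub_pos.2 hST; positivity)
  · filter_upwards [ae_restrict_mem measurableSet_Ioo] with τ hτ
    exact Real.rpow_nonneg (sub_pos.2 hτ.2).le _
  · rw [← integral_Ioc_eq_integral_Ioo, ← intervalIntegral.integral_of_le hST.le,
      intervalIntegral.integral_comp_sub_left (fun u ↦ u ^ r), sub_self,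
      integral_rpow (Or.inl hr), Real.zero_rpow hr1.ne', sub_zero]

lemma setLIntegral_Ioi_div_rpow_mul_add_one_le {p A : ℝ} (hp : 2 < p) (hA : 0 < A) :
    ∫⁻ R in Ioi 0, ENNReal.ofReal (R / (R ^ p * A + 1))
      ≤ ENNReal.ofReal ((1 + 1 / (p - 2)) * A ^ (-2 / p)) := by
  set R₀ := A ^ (-1 / p) with hR₀
  have hR₀pos : 0 < R₀ := Real.rpow_pos_of_pos hA _
  have near : ∫⁻ R in Ioc 0 R₀, ENNReal.ofReal (R / (R ^ p * A + 1))
      ≤ ENNReal.ofReal (A ^ (-2 / p)) := by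
    calc ∫⁻ R in Ioc 0 R₀, ENNReal.ofReal (R / (R ^ p * A + 1))
        ≤ ∫⁻ _ in Ioc 0 R₀, ENNReal.ofReal R₀ := by
          refine setLIntegral_mono measurable_const fun R hR ↦ ENNReal.ofReal_le_ofReal ?_
          have : 0 ≤ R ^ p * A := by have := hR.1; positivity
          exact (div_le_self hR.1.le (by linarith)).trans hR.2
      _ = ENNReal.ofReal (A ^ (-2 / p)) := by
          rw [setLIntegral_const, Real.volume_Ioc, sub_zero, ← ENNReal.ofReal_mul hR₀pos.le,
            hR₀, ← Real.rpow_add hA]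
          ring_nf
  have tail : ∫⁻ R in Ioi R₀, ENNReal.ofReal (R / (R ^ p * A + 1))
      ≤ ENNReal.ofReal (1 / (p - 2) * A ^ (-2 / p)) := by
    calc ∫⁻ R in Ioi R₀, ENNReal.ofReal (R / (R ^ p * A + 1))
        ≤ ∫⁻ R in Ioi R₀, ENNReal.ofReal (A⁻¹ * R ^ (1 - p)) := by
          refine setLIntegral_mono (by fun_prop) fun R hR ↦ ENNReal.ofReal_le_ofReal ?_
          have hR0 : 0 < R := hR₀pos.trans hR
          rw [Real.rpow_sub hR0, Real.rpow_one]
          calc R / (R ^ p * A + 1) ≤ R / (R ^ p * A) :=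
                div_le_div_of_nonneg_left hR0.le (by positivity) (by linarith)
            _ = A⁻¹ * (R / R ^ p) := by field_simp
      _ = ENNReal.ofReal (1 / (p - 2) * A ^ (-2 / p)) := by
          refine lintegral_ofReal_eq_of_integral_eq ?_ ?_ (by positivity)
          · filter_upwards [ae_restrict_mem measurableSet_Ioi] with R hR
            have := hR₀pos.trans hR
            positivity
          · have hscale : A⁻¹ * R₀ ^ (2 - p) = A ^ (-2 / p) := by
              rw [hR₀, ← Real.rpow_mul hA.le, ← Real.rpow_neg_one, ← Real.rpow_add hA]
              congr 1
              field_simp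
              ring
            rw [integral_const_mul, integral_Ioi_rpow_of_lt (by linarith) hR₀pos,
              show 1 - p + 1 = 2 - p by ring, ← hscale, ← neg_sub p 2, div_neg]
            ring
  rw [← Ioc_union_Ioi_eq_Ioi hR₀pos.le,
    lintegral_union measurableSet_Ioi (Ioc_disjoint_Ioi le_rfl)]
  calc _ ≤ ENNReal.ofReal (A ^ (-2 / p)) + ENNReal.ofReal (1 / (p - 2) * A ^ (-2 / p)) :=
        add_le_add near tail
    _ = _ := by
        rw [← ENNReal.ofReal_add (by positivity) (by positivity)]
        ring_nf

lemma lintegral_rpow_mul_exp_neg_abs_sub_div {c t : ℝ} (hc : 0 < c) (ht : 0 < t) (x : ℝ) :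
    ∫⁻ z, ENNReal.ofReal (t ^ (-3/2 : ℝ) * Real.exp (-c * |x - z| / t))
      = ENNReal.ofReal (2 / c * t ^ (-1/2 : ℝ)) := by
  have hexp : ∀ z, -c * |x - z| / t = -(c / t) * |x - z| := fun z ↦ by ring
  simp_rw [ENNReal.ofReal_mul (Real.rpow_nonneg ht.le _), hexp]
  rw [lintegral_const_mul' _ _ ENNReal.ofReal_ne_top, lintegral_exp_neg_mul_abs_sub (by positivity),
    ← ENNReal.ofReal_mul (Real.rpow_nonneg ht.le _)]
  congr 1
  rw [show (-1/2 : ℝ) = -3/2 + 1 by norm_num, Real.rpow_add ht, Real.rpow_one]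
  field_simp

lemma setLIntegral_Ioo_lintegral_heat_kernel {c : ℝ} (hc : 0 < c) {S T : ℝ} (hST : S < T)
    (x : ℝ) :
    ∫⁻ τ in Ioo S T, ∫⁻ z,
        ENNReal.ofReal ((T - τ) ^ (-3/2 : ℝ) * Real.exp (-c * |x - z| / (T - τ)))
      = ENNReal.ofReal (4 / c * (T - S) ^ (1/2 : ℝ)) := by
  calc _ = ∫⁻ τ in Ioo S T,
        ENNReal.ofReal (2 / c) * ENNReal.ofReal ((T - τ) ^ (-1/2 : ℝ)) := by
        refine setLIntegral_congr_fun measurableSet_Ioo fun τ hτ ↦ ?_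
        rw [lintegral_rpow_mul_exp_neg_abs_sub_div hc (sub_pos.2 hτ.2),
          ENNReal.ofReal_mul (by positivity)]
    _ = _ := by
        rw [lintegral_const_mul' _ _ ENNReal.ofReal_ne_top,
          setLIntegral_Ioo_sub_rpow (by norm_num) hST, ← ENNReal.ofReal_mul (by positivity),
          show (-1/2 : ℝ) + 1 = 1/2 by norm_num]
        ring_nf

lemma setLIntegral_Ioi_div_rpow_three_sub_mul_rpow_add_one_le {α M : ℝ} (hα : α ∈ Ico 0 1)
    (hM : 1 ≤ M) :
    ∫⁻ R in Ioi 0, ENNReal.ofReal (R / (R ^ (3 - α) * M ^ α + 1))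
      ≤ ENNReal.ofReal ((1 + 1 / (1 - α)) * M ^ (-2 * α / 3)) := by
  have h3α : 0 < 3 - α := by linarith [hα.2]
  have hexp : α * (-2 / (3 - α)) ≤ -2 * α / 3 := by
    rw [mul_div_assoc', div_le_div_iff₀ h3α (by norm_num)]
    nlinarith [hα.1]
  calc _ ≤ ENNReal.ofReal ((1 + 1 / (3 - α - 2)) * (M ^ α) ^ (-2 / (3 - α))) :=
        setLIntegral_Ioi_div_rpow_mul_add_one_le (by linarith [hα.2]) (by positivity)
    _ ≤ _ := by
        rw [show 3 - α - 2 = 1 - α by ring, ← Real.rpow_mul (by positivity)]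
        have h1α : 0 < 1 - α := by linarith [hα.2]
        gcongr

/-- The cylindrical-coordinates integral bound
`∫_S^T ∫_ℝ ∫_0^∞ (T−τ)^{−3/2} e^{−c|X₃−Z|/(T−τ)} R/(R^{3−α}M^α+1) dR dZ dτ
  ≤ C (T−S)^{1/2} M^{−2α/3}`. -/
theorem stmt19 (α c : ℝ) (hα : α ∈ Ioo (0:ℝ) 1) (hc : 0 < c) :
    ∃ C : ℝ, 0 < C ∧ ∀ M : ℝ, 1 ≤ M → ∀ S T X₃ : ℝ, S < T →
      (∫⁻ τ in Ioo S T, ∫⁻ Z : ℝ, ∫⁻ R in Ioi (0:ℝ),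
          ENNReal.ofReal ((T - τ) ^ (-3/2 : ℝ) * Real.exp (-c * |X₃ - Z| / (T - τ))
            * (R / (R ^ (3 - α) * M ^ α + 1))))
        ≤ ENNReal.ofReal (C * (T - S) ^ (1/2 : ℝ) * M ^ (-2 * α / 3)) := by
  have h1α : 0 < 1 - α := by linarith [hα.2]
  refine ⟨4 / c * (1 + 1 / (1 - α)), by positivity, fun M hM S T X₃ hST ↦ ?_⟩
  set radial := ENNReal.ofReal ((1 + 1 / (1 - α)) * M ^ (-2 * α / 3))
  have hradial : radial ≠ ⊤ := ENNReal.ofReal_ne_top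
  calc _ = ∫⁻ τ in Ioo S T, ∫⁻ Z : ℝ,
        ENNReal.ofReal ((T - τ) ^ (-3/2 : ℝ) * Real.exp (-c * |X₃ - Z| / (T - τ)))
          * ∫⁻ R in Ioi (0:ℝ), ENNReal.ofReal (R / (R ^ (3 - α) * M ^ α + 1)) := by
        refine setLIntegral_congr_fun measurableSet_Ioo fun τ hτ ↦ lintegral_congr fun Z ↦ ?_
        have hτ' : 0 < T - τ := sub_pos.2 hτ.2
        have hkernel : 0 ≤ (T - τ) ^ (-3/2 : ℝ) * Real.exp (-c * |X₃ - Z| / (T - τ)) := by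
          positivity
        simp_rw [ENNReal.ofReal_mul hkernel]
        exact lintegral_const_mul' _ _ ENNReal.ofReal_ne_top
    _ ≤ ∫⁻ τ in Ioo S T, ∫⁻ Z : ℝ,
        ENNReal.ofReal ((T - τ) ^ (-3/2 : ℝ) * Real.exp (-c * |X₃ - Z| / (T - τ)))
          * radial := by
        gcongr
        exact setLIntegral_Ioi_div_rpow_three_sub_mul_rpow_add_one_le ⟨hα.1.le, hα.2⟩ hM
    _ = ENNReal.ofReal (4 / c * (T - S) ^ (1/2 : ℝ)) * radial := by
        simp_rw [lintegral_mul_const' _ _ hradial]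
        rw [setLIntegral_Ioo_lintegral_heat_kernel hc hST]
    _ = _ := by
        rw [← ENNReal.ofReal_mul (by positivity)]
        ring_nf
end
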